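/- arXiv:0811.1654 — 8 statements merged into one kernel-verified Lean document; each statement's English description precedes it below -/
import Mathlib

section
/- Let (X, T, D) be a rank-r MGDS satisfying (DC). Suppose x ∈ D m, y ∈ D n with T m x = T n y, and y ∈ D m', z ∈ D n' with T m' y = T n' z (m, n, m', n' ∈ ℕ^r). Then y ∈ D (n ⊔ m'), x ∈ D (m + (n ⊔ m') − n), z ∈ D (n' + (n ⊔ m') − m'), and T (m + (n ⊔ m') − n) x = T (n' + (n ⊔ m') − m') z. (Consequently the semidirect product set G(X,T) = {(x, m−n, y) ∈ X × ℤ^r × X : ∃ m n ∈ ℕ^r, x ∈ D m, y ∈ D n, T m x = T n y} is closed under the composition (x,z,y)(y,z',w) = (x, z+z', w).) -/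
/-- A multiply generated dynamical system (MGDS) of rank `r` on a set `X`:
a family of subsets `D n ⊆ X` and maps `T n : X → X` indexed by `n ∈ ℕ^r`
such that `D 0 = X`, `T 0 = id`, `D (m+n) = {x ∈ D n | T n x ∈ D m}` and
`T (m+n) x = T m (T n x)` on `D (m+n)`. -/
structure MGDS (r : ℕ) (X : Type*) where
  D : (Fin r → ℕ) → Set X
  T : (Fin r → ℕ) → X → X
  D_zero : D 0 = Set.univ
  T_zero : ∀ x, T 0 x = x
  D_add : ∀ m n, D (m + n) = {x ∈ D n | T n x ∈ D m}
  T_add : ∀ m n, ∀ x ∈ D (m + n), T (m + n) x = T m (T n x)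

/-- The domain condition (DC): `D m ∩ D n ⊆ D (m ⊔ n)` where `⊔` is the
coordinatewise maximum. -/
def MGDS.DC {r : ℕ} {X : Type*} (S : MGDS r X) : Prop :=
  ∀ m n : Fin r → ℕ, S.D m ∩ S.D n ⊆ S.D (m ⊔ n)

/-! Since `T m x = T n y`, whenever `y` can be pushed forward to some `p ≥ n`, `x` can be pushed
forward by `p - n` and lands at `T p y`. (DC) lets `y` reach `n ⊔ m'`; applied to `(x, y)` and to
`(z, y)` this gives the common point `T (n ⊔ m') y`. -/

namespace MGDS

variable {r : ℕ} {X : Type*} (S : MGDS r X)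

theorem mem_D_add_iff {m n : Fin r → ℕ} {x : X} :
    x ∈ S.D (m + n) ↔ x ∈ S.D n ∧ S.T n x ∈ S.D m := by
  rw [S.D_add]
  rfl

theorem mem_D_add_tsub_and_T_eq {m n p : Fin r → ℕ} {x y : X}
    (hx : x ∈ S.D m) (hxy : S.T m x = S.T n y) (hnp : n ≤ p) (hy : y ∈ S.D p) :
    x ∈ S.D (m + p - n) ∧ S.T (m + p - n) x = S.T p y := by
  have hp : p - n + n = p := tsub_add_cancel_of_le hnp
  have hmp : m + p - n = p - n + m := by rw [add_tsub_assoc_of_le hnp, add_comm]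
  rw [← hp] at hy
  have hx' : x ∈ S.D (p - n + m) := S.mem_D_add_iff.2 ⟨hx, hxy ▸ (S.mem_D_add_iff.1 hy).2⟩
  refine ⟨hmp ▸ hx', ?_⟩
  calc S.T (m + p - n) x = S.T (p - n) (S.T m x) := by rw [hmp, S.T_add _ _ x hx']
    _ = S.T (p - n + n) y := by rw [hxy, S.T_add _ _ y hy]
    _ = S.T p y := by rw [hp]

end MGDS

/-- in an MGDS with (DC), if `T m x = T n y` and `T m' y = T n' z`,
then `y ∈ D (n ⊔ m')`, `x ∈ D (m + (n ⊔ m') - n)`, `z ∈ D (n' + (n ⊔ m') - m')`, and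
`T (m + (n ⊔ m') - n) x = T (n' + (n ⊔ m') - m') z`.  Consequently the semidirect
product set `G(X,T)` is closed under composition. -/
theorem mgds_semidirect_closed_under_composition
    {r : ℕ} {X : Type*} (S : MGDS r X) (hDC : S.DC)
    (m n m' n' : Fin r → ℕ) (x y z : X)
    (hx : x ∈ S.D m) (hy : y ∈ S.D n) (hxy : S.T m x = S.T n y)
    (hy' : y ∈ S.D m') (hz : z ∈ S.D n') (hyz : S.T m' y = S.T n' z) :
    y ∈ S.D (n ⊔ m') ∧
    x ∈ S.D (m + (n ⊔ m') - n) ∧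
    z ∈ S.D (n' + (n ⊔ m') - m') ∧
    S.T (m + (n ⊔ m') - n) x = S.T (n' + (n ⊔ m') - m') z := by
  have hy_sup : y ∈ S.D (n ⊔ m') := hDC n m' ⟨hy, hy'⟩
  obtain ⟨hx_sup, hTx⟩ := S.mem_D_add_tsub_and_T_eq hx hxy le_sup_left hy_sup
  obtain ⟨hz_sup, hTz⟩ := S.mem_D_add_tsub_and_T_eq hz hyz.symm le_sup_right hy_sup
  exact ⟨hy_sup, hx_sup, hz_sup, hTx.trans hTz.symm⟩
end

section
/- Let (X, T, D) be a rank-r MGDS satisfying (DC). Suppose m, n, m', n' ∈ ℕ^r satisfy m − n = m' − n' in ℤ^r, and x ∈ D m ∩ D m', y ∈ D n ∩ D n' are such that T m x = T n y and T m' x = T n' y. Then x ∈ D (m ⊔ m'), y ∈ D (n ⊔ n'), and T (m ⊔ m') x = T (n ⊔ n') y. (This is the inclusion 𝒰(U;m,n;V) ∩ 𝒰(U';m',n';V') ⊇ 𝒰(U∩U'; m⊔m', n⊔n'; V∩V') showing that the basic sets of the semidirect product groupoid form a basis for a topology.) -/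
/-! Both components lie in the joined domains by (DC). Writing `p = m ⊔ m'` and `q = n ⊔ n'`,
the hypothesis `m - n = m' - n'` gives `p - m = q - n =: k` coordinatewise, so the semigroup law
yields `T p x = T k (T m x) = T k (T n y) = T q y`. -/

theorem Pi.sup_tsub_eq_sup_tsub {ι : Type*} {m n m' n' : ι → ℕ}
    (hdiff : ∀ i, (m i : ℤ) - (n i : ℤ) = (m' i : ℤ) - (n' i : ℤ)) :
    (m ⊔ m') - m = (n ⊔ n') - n := by
  funext i
  have := hdiff i
  simp only [Pi.sub_apply, Pi.sup_apply]
  omega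

namespace MGDS

variable {r : ℕ} {X : Type*} (S : MGDS r X)

theorem T_eq_T_tsub_comp {m p : Fin r → ℕ} (hmp : m ≤ p) {x : X} (hx : x ∈ S.D p) :
    S.T p x = S.T (p - m) (S.T m x) := by
  have hsplit : p - m + m = p := tsub_add_cancel_of_le hmp
  rw [← hsplit] at hx
  calc S.T p x = S.T (p - m + m) x := by rw [hsplit]
    _ = S.T (p - m) (S.T m x) := S.T_add _ _ x hx

theorem T_eq_T_of_tsub_eq {m n p q : Fin r → ℕ} (hmp : m ≤ p) (hnq : n ≤ q)
    (hsub : p - m = q - n) {x y : X} (hx : x ∈ S.D p) (hy : y ∈ S.D q)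
    (hxy : S.T m x = S.T n y) : S.T p x = S.T q y := by
  rw [S.T_eq_T_tsub_comp hmp hx, S.T_eq_T_tsub_comp hnq hy, hxy, hsub]

end MGDS

theorem mgds_basic_sets_form_basis_general
    {r : ℕ} {X : Type*} (S : MGDS r X) (hDC : S.DC)
    (m n m' n' : Fin r → ℕ)
    (hdiff : ∀ i, (m i : ℤ) - (n i : ℤ) = (m' i : ℤ) - (n' i : ℤ))
    (x y : X)
    (hx : x ∈ S.D m ∩ S.D m') (hy : y ∈ S.D n ∩ S.D n')
    (h1 : S.T m x = S.T n y) :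
    x ∈ S.D (m ⊔ m') ∧ y ∈ S.D (n ⊔ n') ∧ S.T (m ⊔ m') x = S.T (n ⊔ n') y := by
  have hxD : x ∈ S.D (m ⊔ m') := hDC m m' hx
  have hyD : y ∈ S.D (n ⊔ n') := hDC n n' hy
  exact ⟨hxD, hyD, S.T_eq_T_of_tsub_eq le_sup_left le_sup_left
    (Pi.sup_tsub_eq_sup_tsub hdiff) hxD hyD h1⟩

/-- in an MGDS with (DC), if `m - n = m' - n'` in `ℤ^r`,
`x ∈ D m ∩ D m'`, `y ∈ D n ∩ D n'`, `T m x = T n y` and `T m' x = T n' y`, then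
`x ∈ D (m ⊔ m')`, `y ∈ D (n ⊔ n')` and `T (m ⊔ m') x = T (n ⊔ n') y`.
(This is the inclusion `𝒰(U;m,n;V) ∩ 𝒰(U';m',n';V') ⊇ 𝒰(U∩U'; m⊔m', n⊔n'; V∩V')`.) -/
theorem mgds_basic_sets_form_basis
    {r : ℕ} {X : Type*} (S : MGDS r X) (hDC : S.DC)
    (m n m' n' : Fin r → ℕ)
    (hdiff : ∀ i, (m i : ℤ) - (n i : ℤ) = (m' i : ℤ) - (n' i : ℤ))
    (x y : X)
    (hx : x ∈ S.D m ∩ S.D m') (hy : y ∈ S.D n ∩ S.D n')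
    (h1 : S.T m x = S.T n y) (h2 : S.T m' x = S.T n' y) :
    x ∈ S.D (m ⊔ m') ∧ y ∈ S.D (n ⊔ n') ∧ S.T (m ⊔ m') x = S.T (n ⊔ n') y :=
  mgds_basic_sets_form_basis_general S hDC m n m' n' hdiff x y hx hy h1
end

section
/- Let (X, T, D) be a rank-r MGDS satisfying (DC). Let m, n, p, q ∈ ℕ^r with m − n = p − q in ℤ^r, let U ⊆ D m ∩ D p be a set on which T (m ⊔ p) is injective, and let x ∈ D n ∩ D q, y, y' ∈ U satisfy T m y = T n x and T p y' = T q x. Then y = y'. (This is the uniqueness underlying the fact that two partial homeomorphisms (T^m|U)^{-1}T^n and (T^p|U)^{-1}T^q with m − n = p − q agreeing at a point have the same germ there.) -/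
/-! Put `s = m ⊔ p`. Since `y ∈ D s` by (DC), one can factor `T s y = T (s - m) (T m y) = T (s - m) (T n x)
= T (s - m + n) x`, and likewise `T s y' = T (s - p + q) x`. The hypothesis `m - n = p - q` says
exactly that `s - m + n = s - p + q`, so `T s` identifies `y` and `y'`, and injectivity on `U`
concludes. -/

namespace MGDS

variable {r : ℕ} {X : Type*} (S : MGDS r X)

theorem T_mem_D_tsub {m s : Fin r → ℕ} (hms : m ≤ s) {y : X} (hy : y ∈ S.D s) :
    S.T m y ∈ S.D (s - m) := by
  rw [← tsub_add_cancel_of_le hms, mem_D_add_iff] at hy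
  exact hy.2

theorem T_eq_T_tsub_T {m s : Fin r → ℕ} (hms : m ≤ s) {y : X} (hy : y ∈ S.D s) :
    S.T s y = S.T (s - m) (S.T m y) := by
  conv_lhs => rw [← tsub_add_cancel_of_le hms]
  exact S.T_add _ _ y (by rwa [tsub_add_cancel_of_le hms])

theorem T_eq_T_tsub_add_of_T_eq {m n s : Fin r → ℕ} (hms : m ≤ s) {x y : X}
    (hx : x ∈ S.D n) (hy : y ∈ S.D s) (h : S.T m y = S.T n x) :
    S.T s y = S.T (s - m + n) x := by
  have hx' : x ∈ S.D (s - m + n) :=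
    S.mem_D_add_iff.2 ⟨hx, h ▸ S.T_mem_D_tsub hms hy⟩
  rw [S.T_eq_T_tsub_T hms hy, h, S.T_add _ _ x hx']

end MGDS

theorem tsub_add_eq_tsub_add_of_intCast_sub_eq {ι : Type*} {m n p q s : ι → ℕ}
    (hdiff : ∀ i, (m i : ℤ) - (n i : ℤ) = (p i : ℤ) - (q i : ℤ)) (hm : m ≤ s) (hp : p ≤ s) :
    s - m + n = s - p + q := by
  funext i
  have hmi : m i ≤ s i := hm i
  have hpi : p i ≤ s i := hp i
  have hi := hdiff i
  simp only [Pi.add_apply, Pi.sub_apply]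
  omega

/-- in an MGDS with (DC), let `m - n = p - q` in `ℤ^r`, let
`U ⊆ D m ∩ D p` be a set on which `T (m ⊔ p)` is injective, and let
`x ∈ D n ∩ D q`, `y, y' ∈ U` with `T m y = T n x` and `T p y' = T q x`.
Then `y = y'`.  (Uniqueness behind the statement that two partial homeomorphisms
`(T^m|U)⁻¹T^n` and `(T^p|U)⁻¹T^q` with `m - n = p - q` agreeing at a point have
the same germ there.) -/
theorem mgds_same_germ_uniqueness
    {r : ℕ} {X : Type*} (S : MGDS r X) (hDC : S.DC)
    (m n p q : Fin r → ℕ)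
    (hdiff : ∀ i, (m i : ℤ) - (n i : ℤ) = (p i : ℤ) - (q i : ℤ))
    (U : Set X) (hU : U ⊆ S.D m ∩ S.D p)
    (hinj : Set.InjOn (S.T (m ⊔ p)) U)
    (x y y' : X) (hx : x ∈ S.D n ∩ S.D q) (hy : y ∈ U) (hy' : y' ∈ U)
    (h1 : S.T m y = S.T n x) (h2 : S.T p y' = S.T q x) :
    y = y' := by
  refine hinj hy hy' ?_
  calc S.T (m ⊔ p) y = S.T (m ⊔ p - m + n) x :=
        S.T_eq_T_tsub_add_of_T_eq le_sup_left hx.1 (hDC m p (hU hy)) h1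
    _ = S.T (m ⊔ p - p + q) x := by
        rw [tsub_add_eq_tsub_add_of_intCast_sub_eq hdiff le_sup_left le_sup_right]
    _ = S.T (m ⊔ p) y' :=
        (S.T_eq_T_tsub_add_of_T_eq le_sup_right hx.2 (hDC m p (hU hy')) h2).symm
end

section
/- Let X be a topological space and (X, T, D) a rank-r MGDS satisfying (DC) which is essentially free. Let m, n, p, q ∈ ℕ^r, let O ⊆ X be a nonempty open set, and let f : X → X be a map such that for every x ∈ O one has x ∈ D n ∩ D q, f x ∈ D m ∩ D p, T m (f x) = T n x, and T p (f x) = T q x. Then n − m = q − p in ℤ^r. -/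
/-- Essential freeness: for every pair of distinct `m, n ∈ ℕ^r` there is no
nonempty open set `O ⊆ D m ∩ D n` on which `T m` and `T n` agree. -/
def MGDS.EssentiallyFree {r : ℕ} {X : Type*} [TopologicalSpace X] (S : MGDS r X) : Prop :=
  ∀ m n : Fin r → ℕ, m ≠ n →
    ¬ ∃ O : Set X, IsOpen O ∧ O.Nonempty ∧ O ⊆ S.D m ∩ S.D n ∧ ∀ x ∈ O, S.T m x = S.T n x

/-! Put `s = m ⊔ p`. On `O`, (DC) places `f x` in `D s`, so `T m (f x) = T n x` lies in `D (s - m)`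
and `T p (f x) = T q x` in `D (s - p)`. Hence `T (s - m + n)` and `T (s - p + q)` are both defined on
`O` and agree there, both being `T s ∘ f`. Essential freeness forces `s - m + n = s - p + q`. -/

namespace MGDS

variable {r : ℕ} {X : Type*} (S : MGDS r X)

variable {S}

theorem mem_D_tsub_add_of_T_eq {s m n : Fin r → ℕ} {x y : X} (hms : m ≤ s) (hx : x ∈ S.D n)
    (hy : y ∈ S.D s) (hxy : S.T m y = S.T n x) : x ∈ S.D (s - m + n) := by
  rw [← tsub_add_cancel_of_le hms, mem_D_add_iff] at hy
  exact S.mem_D_add_iff.2 ⟨hx, hxy ▸ hy.2⟩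

theorem T_tsub_add_eq_of_T_eq {s m n : Fin r → ℕ} {x y : X} (hms : m ≤ s) (hx : x ∈ S.D n)
    (hy : y ∈ S.D s) (hxy : S.T m y = S.T n x) : S.T (s - m + n) x = S.T s y := by
  have hy' : y ∈ S.D (s - m + m) := by rwa [tsub_add_cancel_of_le hms]
  rw [S.T_add _ _ x (mem_D_tsub_add_of_T_eq hms hx hy hxy), ← hxy, ← S.T_add _ _ y hy',
    tsub_add_cancel_of_le hms]

theorem EssentiallyFree.eq_of_eqOn [TopologicalSpace X] (hEF : S.EssentiallyFree)
    {m n : Fin r → ℕ} {O : Set X} (hO : IsOpen O) (hne : O.Nonempty)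
    (hD : O ⊆ S.D m ∩ S.D n) (hT : Set.EqOn (S.T m) (S.T n) O) : m = n := by
  by_contra hmn
  exact hEF m n hmn ⟨O, hO, hne, hD, hT⟩

end MGDS

/-- in an essentially free MGDS with (DC), if on a nonempty open set
`O` a map `f` satisfies `T m (f x) = T n x` and `T p (f x) = T q x` (with the
stated domain conditions), then `n - m = q - p` in `ℤ^r`. -/
theorem mgds_essentially_free_germ_degree
    {r : ℕ} {X : Type*} [TopologicalSpace X] (S : MGDS r X)
    (hDC : S.DC) (hEF : S.EssentiallyFree)
    (m n p q : Fin r → ℕ) (O : Set X) (hO : IsOpen O) (hne : O.Nonempty)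
    (f : X → X)
    (h : ∀ x ∈ O, x ∈ S.D n ∩ S.D q ∧ f x ∈ S.D m ∩ S.D p ∧
      S.T m (f x) = S.T n x ∧ S.T p (f x) = S.T q x) :
    ∀ i, (n i : ℤ) - (m i : ℤ) = (q i : ℤ) - (p i : ℤ) := by
  have heq : m ⊔ p - m + n = m ⊔ p - p + q := by
    refine hEF.eq_of_eqOn hO hne (fun x hx => ?_) (fun x hx => ?_) <;>
      obtain ⟨hx, hfx, hm, hp⟩ := h x hx <;> have hs := hDC m p hfx
    · exact ⟨MGDS.mem_D_tsub_add_of_T_eq le_sup_left hx.1 hs hm,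
        MGDS.mem_D_tsub_add_of_T_eq le_sup_right hx.2 hs hp⟩
    · exact (MGDS.T_tsub_add_eq_of_T_eq le_sup_left hx.1 hs hm).trans
        (MGDS.T_tsub_add_eq_of_T_eq le_sup_right hx.2 hs hp).symm
  intro i
  have hi := congrFun heq i
  simp only [Pi.add_apply, Pi.sub_apply, Pi.sup_apply] at hi
  omega
end

section
/- Let (X, T, D) be a rank-r MGDS satisfying (DC). Suppose x ∈ D m, y ∈ D n and T m x = T n y (m, n ∈ ℕ^r). Then for every coordinate j one has σ(x)_j + n_j = σ(y)_j + m_j in ℕ∞; in particular σ(x)_j is finite if and only if σ(y)_j is finite, and in that case m_j − n_j = σ(x)_j − σ(y)_j in ℤ. (This says that for an element (x, z, y) of the semidirect product groupoid, the coordinates of z at indices where the exit time is finite are determined by x and y.) -/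
/-- The exit time `σ(x) ∈ (ℕ∞)^r`: coordinatewise,
`σ(x)_j = sup { n_j : n ∈ ℕ^r, x ∈ D n }`, the supremum taken in `ℕ∞`. -/
noncomputable def MGDS.exitTime {r : ℕ} {X : Type*} (S : MGDS r X) (x : X) : Fin r → ℕ∞ :=
  fun j => ⨆ (n : Fin r → ℕ) (_ : x ∈ S.D n), (n j : ℕ∞)

/-!
If `x ∈ D k` and `x ∈ D m`, then (DC) gives `x ∈ D (k ⊔ m)`, so `T m x = T n y` lies in
`D (k ⊔ m - m)` and hence `y ∈ D (k ⊔ m - m + n)`. Since `k_j ≤ (k ⊔ m - m)_j + m_j`, taking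
the supremum over `k` yields `σ(x)_j + n_j ≤ σ(y)_j + m_j`; the reverse inequality follows by
symmetry. The finiteness and integer statements are then arithmetic in `ℕ∞`.
-/

namespace ENat

theorem ne_top_iff_of_add_natCast_eq {a b : ℕ∞} {k l : ℕ} (h : a + k = b + l) :
    a ≠ ⊤ ↔ b ≠ ⊤ := by
  have hab : a + k = ⊤ ↔ b + l = ⊤ := by rw [h]
  simpa [ENat.add_eq_top] using hab.not

theorem toNat_add_eq_of_add_natCast_eq {a b : ℕ∞} {k l : ℕ} (h : a + k = b + l)
    (ha : a ≠ ⊤) : a.toNat + k = b.toNat + l := by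
  have hb : b ≠ ⊤ := (ne_top_iff_of_add_natCast_eq h).1 ha
  rw [← ENat.natCast_toNat ha, ← ENat.natCast_toNat hb] at h
  exact_mod_cast h

end ENat

namespace MGDS

variable {r : ℕ} {X : Type*} (S : MGDS r X)

theorem le_exitTime {n : Fin r → ℕ} {x : X} (hx : x ∈ S.D n) (j : Fin r) :
    (n j : ℕ∞) ≤ S.exitTime x j :=
  le_iSup₂_of_le n hx le_rfl

theorem T_mem_D_sup_sub (hDC : S.DC) {k m : Fin r → ℕ} {x : X}
    (hk : x ∈ S.D k) (hm : x ∈ S.D m) : S.T m x ∈ S.D (k ⊔ m - m) := by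
  have hkm : x ∈ S.D (k ⊔ m - m + m) := by
    rw [tsub_add_cancel_of_le le_sup_right]
    exact hDC k m ⟨hk, hm⟩
  exact ((S.mem_D_add_iff).1 hkm).2

theorem exitTime_add_le_of_T_eq (hDC : S.DC) {m n : Fin r → ℕ} {x y : X}
    (hx : x ∈ S.D m) (hy : y ∈ S.D n) (hxy : S.T m x = S.T n y) (j : Fin r) :
    S.exitTime x j + n j ≤ S.exitTime y j + m j := by
  rw [exitTime, ENat.biSup_add' ⟨m, hx⟩]
  refine iSup₂_le fun k hk => ?_
  have hyk : y ∈ S.D (k ⊔ m - m + n) :=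
    S.mem_D_add_iff.2 ⟨hy, hxy ▸ S.T_mem_D_sup_sub hDC hk hx⟩
  have hkj : k j ≤ (k ⊔ m - m) j + m j := by
    simp only [Pi.sub_apply, Pi.sup_apply]
    omega
  calc (k j : ℕ∞) + n j ≤ ((k ⊔ m - m + n) j : ℕ) + m j := by
        push_cast [Pi.add_apply]
        rw [add_right_comm]
        gcongr
        exact_mod_cast hkj
    _ ≤ S.exitTime y j + m j := by gcongr; exact S.le_exitTime hyk j

theorem exitTime_add_eq_of_T_eq (hDC : S.DC) {m n : Fin r → ℕ} {x y : X}
    (hx : x ∈ S.D m) (hy : y ∈ S.D n) (hxy : S.T m x = S.T n y) (j : Fin r) :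
    S.exitTime x j + n j = S.exitTime y j + m j :=
  le_antisymm (S.exitTime_add_le_of_T_eq hDC hx hy hxy j)
    (S.exitTime_add_le_of_T_eq hDC hy hx hxy.symm j)

end MGDS

/-- in an MGDS with (DC), if `x ∈ D m`, `y ∈ D n` and
`T m x = T n y`, then `σ(x)_j + n_j = σ(y)_j + m_j` in `ℕ∞` for all `j`; in
particular `σ(x)_j` is finite iff `σ(y)_j` is, and then
`m_j - n_j = σ(x)_j - σ(y)_j` in `ℤ`. -/
theorem mgds_cocycle_determined_on_finite_coordinates
    {r : ℕ} {X : Type*} (S : MGDS r X) (hDC : S.DC)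
    (m n : Fin r → ℕ) (x y : X)
    (hx : x ∈ S.D m) (hy : y ∈ S.D n) (hxy : S.T m x = S.T n y) :
    ∀ j, S.exitTime x j + (n j : ℕ∞) = S.exitTime y j + (m j : ℕ∞) ∧
      (S.exitTime x j ≠ ⊤ ↔ S.exitTime y j ≠ ⊤) ∧
      (S.exitTime x j ≠ ⊤ →
        (m j : ℤ) - (n j : ℤ) =
          ((S.exitTime x j).toNat : ℤ) - ((S.exitTime y j).toNat : ℤ)) := by
  intro j
  have heq := S.exitTime_add_eq_of_T_eq hDC hx hy hxy j
  refine ⟨heq, ENat.ne_top_iff_of_add_natCast_eq heq, fun hfin => ?_⟩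
  have := ENat.toNat_add_eq_of_add_natCast_eq heq hfin
  omega
end

section
/- Let (X, T, D) be a rank-r MGDS satisfying (DC) and let J ⊆ {1,…,r}. Let X_J = { x ∈ X : σ(x)_j = ∞ if and only if j ∈ J }. Then the relation R_J on X_J defined by: x R_J y if and only if there exist m, n ∈ ℕ^r with m_j = n_j for all j ∈ J, x ∈ D m, y ∈ D n, and T m x = T n y, is an equivalence relation on X_J (reflexive, symmetric, and transitive). -/
/-!
Reflexivity and symmetry are immediate. For transitivity, let `T m x = T n y` and
`T p y = T q z`. By (DC), `y ∈ D (n ⊔ p)`, so both meetings can be run forward until `y` has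
been moved for time `n ⊔ p`: with `a = n ⊔ p - n` and `b = n ⊔ p - p` this gives
`T (a + m) x = T (n ⊔ p) y = T (b + q) z`, and on `J` both times equal `(n ⊔ p) j`.
-/

namespace MGDS

variable {r : ℕ} {X : Type*} (S : MGDS r X)

theorem mem_D_zero (x : X) : x ∈ S.D 0 :=
  S.D_zero ▸ Set.mem_univ x

theorem mem_D_add_and_T_add_eq_of_T_eq {a m n : Fin r → ℕ} {x y : X} (hx : x ∈ S.D m)
    (hxy : S.T m x = S.T n y) (hy : y ∈ S.D (a + n)) :
    x ∈ S.D (a + m) ∧ S.T (a + m) x = S.T (a + n) y := by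
  have hx' : x ∈ S.D (a + m) := S.mem_D_add_iff.2 ⟨hx, hxy ▸ (S.mem_D_add_iff.1 hy).2⟩
  exact ⟨hx', by rw [S.T_add a m x hx', S.T_add a n y hy, hxy]⟩

/-- The relation `R_J`. -/
def SyncRel (J : Set (Fin r)) (x y : X) : Prop :=
  ∃ m n : Fin r → ℕ, (∀ j ∈ J, m j = n j) ∧ x ∈ S.D m ∧ y ∈ S.D n ∧ S.T m x = S.T n y

variable {S}

theorem syncRel_refl (J : Set (Fin r)) (x : X) : S.SyncRel J x x :=
  ⟨0, 0, fun _ _ => rfl, S.mem_D_zero x, S.mem_D_zero x, rfl⟩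

theorem SyncRel.symm {J : Set (Fin r)} {x y : X} : S.SyncRel J x y → S.SyncRel J y x :=
  fun ⟨m, n, hJ, hx, hy, hxy⟩ => ⟨n, m, fun j hj => (hJ j hj).symm, hy, hx, hxy.symm⟩

theorem SyncRel.trans (hDC : S.DC) {J : Set (Fin r)} {x y z : X} :
    S.SyncRel J x y → S.SyncRel J y z → S.SyncRel J x z := by
  rintro ⟨m, n, hmn, hx, hy, hxy⟩ ⟨p, q, hpq, hy', hz, hyz⟩
  have hna : n ⊔ p - n + n = n ⊔ p := tsub_add_cancel_of_le le_sup_left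
  have hpb : n ⊔ p - p + p = n ⊔ p := tsub_add_cancel_of_le le_sup_right
  have hy_sup : y ∈ S.D (n ⊔ p) := hDC n p ⟨hy, hy'⟩
  obtain ⟨hx', hxy'⟩ :=
    S.mem_D_add_and_T_add_eq_of_T_eq (a := n ⊔ p - n) hx hxy (hna.symm ▸ hy_sup)
  obtain ⟨hz', hzy'⟩ :=
    S.mem_D_add_and_T_add_eq_of_T_eq (a := n ⊔ p - p) hz hyz.symm (hpb.symm ▸ hy_sup)
  refine ⟨_, _, fun j hj => ?_, hx', hz', by rw [hxy', hzy', hna, hpb]⟩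
  have hmnj := hmn j hj
  have hpqj := hpq j hj
  simp only [Pi.add_apply, Pi.sub_apply, Pi.sup_apply]
  omega

theorem syncRel_equivalence (hDC : S.DC) (J : Set (Fin r)) : Equivalence (S.SyncRel J) :=
  ⟨syncRel_refl J, SyncRel.symm, SyncRel.trans hDC⟩

end MGDS

/-- in an MGDS with (DC), for `J ⊆ {1,…,r}`, on the set
`X_J = {x : σ(x)_j = ∞ ↔ j ∈ J}` the relation
`x R_J y ↔ ∃ m n, (m_j = n_j ∀ j ∈ J) ∧ x ∈ D m ∧ y ∈ D n ∧ T m x = T n y`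
is an equivalence relation (reflexive, symmetric and transitive). -/
theorem mgds_RJ_equivalence
    {r : ℕ} {X : Type*} (S : MGDS r X) (hDC : S.DC) (J : Set (Fin r)) :
    let XJ : Set X := {x | ∀ j, S.exitTime x j = ⊤ ↔ j ∈ J}
    let R : X → X → Prop := fun x y => ∃ m n : Fin r → ℕ,
      (∀ j ∈ J, m j = n j) ∧ x ∈ S.D m ∧ y ∈ S.D n ∧ S.T m x = S.T n y
    (∀ x ∈ XJ, R x x) ∧
    (∀ x ∈ XJ, ∀ y ∈ XJ, R x y → R y x) ∧
    (∀ x ∈ XJ, ∀ y ∈ XJ, ∀ z ∈ XJ, R x y → R y z → R x z) := by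
  intro XJ R
  have hR : Equivalence R := S.syncRel_equivalence hDC J
  exact ⟨fun x _ => hR.refl x, fun _ _ _ _ => hR.symm, fun _ _ _ _ _ _ => hR.trans⟩
end

section
/- Let α be a nonempty type and let X be the free monoid on α (words in the letters of α, with empty word Ω). For (a,b) ∈ ℕ² let D (a,b) = { w ∈ X : a + b ≤ length(w) } and let T (a,b) w be the word obtained from w by deleting its first a letters and its last b letters. Then: (1) this data satisfies the MGDS axioms of rank 2; (2) the domain condition (DC) fails: every one-letter word lies in D (1,0) ∩ D (0,1) but not in D (1,1); (3) the set G = { (x, z, y) ∈ X × ℤ² × X : ∃ m n ∈ ℕ², x ∈ D m, y ∈ D n, z = m − n, T m x = T n y } is not closed under the composition (x,z,y)(y,z',w) = (x, z+z', w): for all nonempty words x, y one has (x, (length x, −length y), y) ∈ G and (y, (length y, 0), Ω) ∈ G, but (x, (length x + length y, −length y), Ω) ∉ G. -/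
/-- Domains for the two-sided shift on the free monoid (words = lists):
`D (a,b) = {w : a + b ≤ length w}`. -/
def wordD (α : Type*) (n : Fin 2 → ℕ) : Set (List α) := {w | n 0 + n 1 ≤ w.length}

/-- `T (a,b)` deletes the first `a` letters and the last `b` letters of a word. -/
def wordT (α : Type*) (n : Fin 2 → ℕ) (w : List α) : List α := (w.drop (n 0)).rdrop (n 1)

/-- The semidirect product set `G` of the system `(L,R)` on the free monoid. -/
def wordG (α : Type*) : Set (List α × (Fin 2 → ℤ) × List α) :=
  {p | ∃ m n : Fin 2 → ℕ, p.1 ∈ wordD α m ∧ p.2.2 ∈ wordD α n ∧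
    p.2.1 = (fun i => (m i : ℤ) - (n i : ℤ)) ∧ wordT α m p.1 = wordT α n p.2.2}

/-!
`D (a, b)` depends only on the total `a + b`, and the total of `(1, 0) ⊔ (0, 1) = (1, 1)` exceeds
that of both arguments; this breaks (DC) on one-letter words. In `G`, `T (a, b) w = Ω` as soon as
`a + b ≥ |w|`: `x` and `y` both collapse to `Ω` under `(|x|, 0)` and `(0, |y|)`, and `y` alone
under `(|y|, 0)`, which gives the two arrows. Their composite is not in `G`, since `Ω ∈ D n` forces
`n = 0`, so an arrow ending at `Ω` has a degree with nonnegative coordinates, while the composite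
has second coordinate `-|y|`.
-/

namespace List

variable {α : Type*}

theorem length_rdrop (l : List α) (n : ℕ) : (l.rdrop n).length = l.length - n := by
  simp [rdrop]

theorem drop_rdrop_comm (l : List α) (i j : ℕ) : (l.rdrop j).drop i = (l.drop i).rdrop j := by
  simp only [rdrop, drop_take, length_drop]
  congr 1
  omega

end List

section WordShift

variable {α : Type*}

theorem length_wordT (n : Fin 2 → ℕ) (w : List α) :
    (wordT α n w).length = w.length - (n 0 + n 1) := by
  simp only [wordT, List.length_rdrop, List.length_drop]
  omega

theorem wordT_eq_nil_of_length_le {n : Fin 2 → ℕ} {w : List α} (h : w.length ≤ n 0 + n 1) :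
    wordT α n w = [] :=
  List.length_eq_zero_iff.mp (by rw [length_wordT]; omega)

theorem wordT_add (m n : Fin 2 → ℕ) (w : List α) :
    wordT α (m + n) w = wordT α m (wordT α n w) := by
  simp only [wordT, Pi.add_apply, List.drop_rdrop_comm, List.drop_drop, List.rdrop_add,
    add_comm]

theorem wordD_add (m n : Fin 2 → ℕ) :
    wordD α (m + n) = {w ∈ wordD α n | wordT α n w ∈ wordD α m} := by
  ext w
  simp only [wordD, Set.mem_ofPred_eq, Pi.add_apply, length_wordT]
  omega

def wordMGDS (α : Type*) : MGDS 2 (List α) where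
  D := wordD α
  T := wordT α
  D_zero := by ext w; simp [wordD]
  T_zero w := by simp [wordT]
  D_add := wordD_add
  T_add m n w _ := wordT_add m n w

theorem mem_wordG_of_length_eq {x y : List α} (m n : Fin 2 → ℕ) (hx : x.length = m 0 + m 1)
    (hy : y.length = n 0 + n 1) : (x, fun i => (m i : ℤ) - n i, y) ∈ wordG α :=
  ⟨m, n, hx.ge, hy.ge, rfl,
    by rw [wordT_eq_nil_of_length_le hx.le, wordT_eq_nil_of_length_le hy.le]⟩

theorem nonneg_of_mem_wordG_nil {x : List α} {z : Fin 2 → ℤ} (h : (x, z, []) ∈ wordG α)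
    (i : Fin 2) : 0 ≤ z i := by
  obtain ⟨m, n, -, hn, rfl, -⟩ := h
  simp only [wordD, Set.mem_ofPred_eq, List.length_nil] at hn
  fin_cases i <;> simp <;> omega

end WordShift

theorem free_monoid_shifts_fail_DC_and_G_not_closed_general (α : Type*) :
    (∃ S : MGDS 2 (List α), S.D = wordD α ∧ S.T = wordT α) ∧
    (∀ a : α, [a] ∈ wordD α ![1, 0] ∩ wordD α ![0, 1] ∧
      [a] ∉ wordD α (![1, 0] ⊔ ![0, 1])) ∧
    (∀ x y : List α, x ≠ [] → y ≠ [] →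
      (x, ![(x.length : ℤ), -(y.length : ℤ)], y) ∈ wordG α ∧
      (y, ![(y.length : ℤ), 0], ([] : List α)) ∈ wordG α ∧
      (x, ![(x.length : ℤ) + (y.length : ℤ), -(y.length : ℤ)], ([] : List α)) ∉ wordG α) := by
  refine ⟨⟨wordMGDS α, rfl, rfl⟩, fun a => by simp [wordD], fun x y _ hy => ⟨?_, ?_, ?_⟩⟩
  · convert mem_wordG_of_length_eq (x := x) (y := y) ![x.length, 0] ![0, y.length]
      (by simp) (by simp) using 3
    ext i
    fin_cases i <;> simp
  · convert mem_wordG_of_length_eq (x := y) (y := []) ![y.length, 0] 0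
      (by simp) (by simp) using 3
    ext i
    fin_cases i <;> simp
  · exact fun h => hy (by simpa using nonneg_of_mem_wordG_nil h 1)

/-- for the left/right deletion system on the free monoid on a
nonempty alphabet `α`: (1) the data `(wordD, wordT)` satisfies the rank-2 MGDS
axioms; (2) the domain condition (DC) fails: a one-letter word lies in
`D (1,0) ∩ D (0,1)` but not in `D ((1,0) ⊔ (0,1)) = D (1,1)`; and (3) the
semidirect product set `G` is not closed under the groupoid composition:
`(x, (|x|,-|y|), y) ∈ G` and `(y,(|y|,0),Ω) ∈ G` but
`(x, (|x|+|y|, -|y|), Ω) ∉ G` for nonempty words `x, y`. -/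
theorem free_monoid_shifts_fail_DC_and_G_not_closed (α : Type*) [Nonempty α] :
    (∃ S : MGDS 2 (List α), S.D = wordD α ∧ S.T = wordT α) ∧
    (∀ a : α, [a] ∈ wordD α ![1, 0] ∩ wordD α ![0, 1] ∧
      [a] ∉ wordD α (![1, 0] ⊔ ![0, 1])) ∧
    (∀ x y : List α, x ≠ [] → y ≠ [] →
      (x, ![(x.length : ℤ), -(y.length : ℤ)], y) ∈ wordG α ∧
      (y, ![(y.length : ℤ), 0], ([] : List α)) ∈ wordG α ∧
      (x, ![(x.length : ℤ) + (y.length : ℤ), -(y.length : ℤ)], ([] : List α)) ∉ wordG α) :=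
  free_monoid_shifts_fail_DC_and_G_not_closed_general α
end

section
/- Let C and D be groupoids (categories in which every morphism is an isomorphism) and let F : C ⥤ D be a functor such that: (a) F is surjective on morphisms, i.e. for all objects u, v of D and every morphism g : u ⟶ v there are objects a, b of C, a morphism f : a ⟶ b, and equalities F(a) = u, F(b) = v identifying F(f) with g; and (b) whenever f : a ⟶ b and g : c ⟶ d are morphisms of C with F(b) = F(c), then b = c (composable pairs lift only to composable pairs). Then F is bijective on objects; moreover, for every object a of C, every morphism of C whose image under F has source F(a) itself has source a, and F maps the set of morphisms of C with source a onto the set of morphisms of D with source F(a). -/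
open CategoryTheory

namespace CategoryTheory.Functor

variable {C D : Type*} [Category C] [Category D] (F : C ⥤ D)

theorem obj_injective_of_composable_lifting
    (hcomp : ∀ (a b c d : C), (a ⟶ b) → (c ⟶ d) → F.obj b = F.obj c → b = c) :
    Function.Injective F.obj :=
  fun a b h => hcomp a a b b (𝟙 a) (𝟙 b) h

theorem obj_surjective_of_surjective_on_arrows
    (hsurj : ∀ (u v : D) (g : u ⟶ v), ∃ (a b : C) (f : a ⟶ b)
      (ha : F.obj a = u) (hb : F.obj b = v),
      F.map f = eqToHom ha ≫ g ≫ eqToHom hb.symm) :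
    Function.Surjective F.obj := fun u =>
  let ⟨a, _, _, ha, _, _⟩ := hsurj u u (𝟙 u)
  ⟨a, ha⟩

theorem exists_map_eq_of_surjective_on_arrows (hinj : Function.Injective F.obj)
    (hsurj : ∀ (u v : D) (g : u ⟶ v), ∃ (a b : C) (f : a ⟶ b)
      (ha : F.obj a = u) (hb : F.obj b = v),
      F.map f = eqToHom ha ≫ g ≫ eqToHom hb.symm)
    (a : C) (v : D) (g : F.obj a ⟶ v) :
    ∃ (b : C) (f : a ⟶ b) (hb : F.obj b = v), F.map f = g ≫ eqToHom hb.symm := by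
  obtain ⟨a', b, f, ha, hb, hf⟩ := hsurj (F.obj a) v g
  obtain rfl : a' = a := hinj ha
  exact ⟨b, f, hb, by simpa using hf⟩

end CategoryTheory.Functor

/-- let `F : C ⥤ D` be a functor between groupoids which is
(a) surjective on morphisms (up to the equalities of objects `F a = u`,
`F b = v`, via transport with `eqToHom`), and such that (b) composable pairs
lift only to composable pairs: whenever `f : a ⟶ b` and `g : c ⟶ d` in `C` with
`F b = F c`, then `b = c`.  Then `F` is bijective on objects; every morphism of
`C` whose image has source `F a` itself has source `a`; and `F` maps the
morphisms with source `a` onto the morphisms of `D` with source `F a`. -/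
theorem groupoid_functor_composable_lifting
    {C D : Type*} [Groupoid C] [Groupoid D] (F : C ⥤ D)
    (hsurj : ∀ (u v : D) (g : u ⟶ v), ∃ (a b : C) (f : a ⟶ b)
      (ha : F.obj a = u) (hb : F.obj b = v),
      F.map f = eqToHom ha ≫ g ≫ eqToHom hb.symm)
    (hcomp : ∀ (a b c d : C), (a ⟶ b) → (c ⟶ d) → F.obj b = F.obj c → b = c) :
    Function.Bijective F.obj ∧
    (∀ (a b c : C), (b ⟶ c) → F.obj b = F.obj a → b = a) ∧
    (∀ (a : C) (v : D) (g : F.obj a ⟶ v), ∃ (b : C) (f : a ⟶ b)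
      (hb : F.obj b = v), F.map f = g ≫ eqToHom hb.symm) := by
  have hinj := F.obj_injective_of_composable_lifting hcomp
  exact ⟨⟨hinj, F.obj_surjective_of_surjective_on_arrows hsurj⟩,
    fun _ _ _ _ h => hinj h, F.exists_map_eq_of_surjective_on_arrows hinj hsurj⟩
end
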